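/- arXiv:1003.3989 — 2 statements merged into one kernel-verified Lean document; each statement's English description precedes it below -/
import Mathlib

section
/- Let n ≥ 1 and N ≥ 1 be integers and let λ be a real number such that λ − n/2 + k ≠ 0 for every integer k with 1 ≤ k ≤ N. For 0 ≤ j ≤ N set a_j(λ) = (−1)^j · C(n, N−j) · (n/2)_j (λ)_j / ((λ − n/2 + 1)_j · j!). Then (λ − n + 2N)·∑_{j=0}^{N} (2N + 2j)·a_j(λ) = −2N·(n − 2N)·∑_{j=0}^{N} a_j(λ). (This is the second form (2.5) of the master relation, verified on the round sphere S^n.) -/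
/-!
The coefficients `a_j` form a terminating hypergeometric sequence: the ratio `a_{j+1} / a_j` is
rational in `j`. With `g_j = j (n + j - N) (2λ - n + 2j) a_j`, the contiguous relation turns
`n (j (λ - n + 2N) + N λ) a_j` into the telescoping difference `g_j - g_{j+1}` for `j < N`, and into
`g_N` for `j = N`. Since `g_0 = 0`, the weighted sum vanishes, and it is `n / 2` times the
difference of the two sides of the identity.
-/

/-- Pochhammer symbol `(x)_k = x (x+1) ⋯ (x+k-1)`, with `(x)_0 = 1`. -/
noncomputable def poch (x : ℝ) : ℕ → ℝ
  | 0 => 1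
  | k + 1 => poch x k * (x + k)

lemma poch_succ (x : ℝ) (k : ℕ) : poch x (k + 1) = poch x k * (x + k) := rfl

lemma poch_ne_zero {x : ℝ} {k : ℕ} (h : ∀ i < k, x + i ≠ 0) : poch x k ≠ 0 := by
  induction k with
  | zero => exact one_ne_zero
  | succ k ih =>
    exact mul_ne_zero (ih fun i hi => h i (by omega)) (h k k.lt_succ_self)

lemma Nat.cast_sub_mul_choose {R : Type*} [CommRing R] (n k : ℕ) :
    ((n : R) - k) * n.choose k = ((k : R) + 1) * n.choose (k + 1) := by
  rcases le_or_gt k n with hkn | hnk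
  · have h := congrArg (Nat.cast (R := R)) (Nat.choose_succ_right_eq n k)
    push_cast [Nat.cast_sub hkn] at h
    linear_combination -h
  · rw [Nat.choose_eq_zero_of_lt hnk, Nat.choose_eq_zero_of_lt (by omega)]
    simp

lemma sum_mul_eq_zero_of_contiguous (n N : ℕ) (lam : ℝ) (a : ℕ → ℝ)
    (hrec : ∀ j < N, ((j : ℝ) + 1) * (n + j + 1 - N) * (2 * lam - n + 2 * (j + 1)) * a (j + 1) =
      -((N : ℝ) - j) * (n + 2 * j) * (lam + j) * a j) :
    ∑ j ∈ Finset.range (N + 1), (n : ℝ) * (j * (lam - n + 2 * N) + N * lam) * a j = 0 := by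
  set g : ℕ → ℝ := fun j => j * (n + j - N) * (2 * lam - n + 2 * j) * a j with hg
  have hstep : ∀ j ∈ Finset.range N,
      (n : ℝ) * (j * (lam - n + 2 * N) + N * lam) * a j = g j - g (j + 1) := by
    intro j hj
    have hgj := hrec j (Finset.mem_range.mp hj)
    simp only [hg]
    push_cast
    linear_combination hgj
  have hgN : (n : ℝ) * (N * (lam - n + 2 * N) + N * lam) * a N = g N := by
    simp only [hg]; ring
  rw [Finset.sum_range_succ, Finset.sum_congr rfl hstep, Finset.sum_range_sub', hgN]
  simp [hg]

section Coefficients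

variable (n N : ℕ) (lam : ℝ)

noncomputable def masterCoeff (j : ℕ) : ℝ :=
  (-1) ^ j * (n.choose (N - j) : ℝ) * poch ((n : ℝ) / 2) j * poch lam j /
    (poch (lam - (n : ℝ) / 2 + 1) j * (j.factorial : ℝ))

lemma masterCoeff_contiguous {j : ℕ} (hj : j < N)
    (hpoch : poch (lam - (n : ℝ) / 2 + 1) (j + 1) ≠ 0) :
    ((j : ℝ) + 1) * (n + j + 1 - N) * (2 * lam - n + 2 * (j + 1)) * masterCoeff n N lam (j + 1) =
      -((N : ℝ) - j) * (n + 2 * j) * (lam + j) * masterCoeff n N lam j := by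
  obtain ⟨k, rfl⟩ : ∃ k, N = j + k + 1 := ⟨N - j - 1, by omega⟩
  rw [poch_succ] at hpoch
  obtain ⟨hD, hx⟩ := mul_ne_zero_iff.mp hpoch
  have hF : (j.factorial : ℝ) ≠ 0 := by positivity
  have hchoose := Nat.cast_sub_mul_choose (R := ℝ) n k
  unfold masterCoeff
  rw [show j + k + 1 - j = k + 1 by omega, show j + k + 1 - (j + 1) = k by omega,
    poch_succ, poch_succ, poch_succ, Nat.factorial_succ, pow_succ]
  push_cast
  rw [show 2 * lam - n + 2 * ((j : ℝ) + 1) = 2 * (lam - n / 2 + 1 + j) by ring]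
  -- opaque names keep `field_simp` from normalising the arguments of `poch`
  generalize lam - n / 2 + 1 + j = x at hx ⊢
  generalize poch (lam - n / 2 + 1) j = D at hD ⊢
  generalize poch (n / 2) j = P at ⊢
  generalize poch lam j = Q at ⊢
  field_simp
  linear_combination -(P * Q * (n + 2 * j) * (lam + j)) * hchoose

end Coefficients

theorem statement3_general (n N : ℕ) (hn : 1 ≤ n) (lam : ℝ)
    (hlam : ∀ k : ℕ, 1 ≤ k → k ≤ N → lam - (n : ℝ) / 2 + k ≠ 0)
    (a : ℕ → ℝ)
    (ha : ∀ j, j ≤ N →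
      a j = (-1) ^ j * (n.choose (N - j) : ℝ) * poch ((n : ℝ) / 2) j * poch lam j /
        (poch (lam - (n : ℝ) / 2 + 1) j * (j.factorial : ℝ))) :
    (lam - n + 2 * N) * ∑ j ∈ Finset.range (N + 1), (2 * N + 2 * j : ℝ) * a j =
      -(2 * N) * ((n : ℝ) - 2 * N) * ∑ j ∈ Finset.range (N + 1), a j := by
  have hrec : ∀ j < N, ((j : ℝ) + 1) * (n + j + 1 - N) * (2 * lam - n + 2 * (j + 1)) * a (j + 1) =
      -((N : ℝ) - j) * (n + 2 * j) * (lam + j) * a j := by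
    intro j hj
    have hpoch : poch (lam - (n : ℝ) / 2 + 1) (j + 1) ≠ 0 := poch_ne_zero fun i hi => by
      have := hlam (i + 1) (by omega) (by omega)
      push_cast at this
      rwa [add_assoc, add_comm 1]
    rw [ha j hj.le, ha (j + 1) hj]
    exact masterCoeff_contiguous n N lam hj hpoch
  have hsum := sum_mul_eq_zero_of_contiguous n N lam a hrec
  have hsplit : ∑ j ∈ Finset.range (N + 1), (n : ℝ) * (j * (lam - n + 2 * N) + N * lam) * a j =
      (n : ℝ) / 2 * ((lam - n + 2 * N) * ∑ j ∈ Finset.range (N + 1), (2 * N + 2 * j : ℝ) * a j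
        + 2 * N * ((n : ℝ) - 2 * N) * ∑ j ∈ Finset.range (N + 1), a j) := by
    simp only [Finset.mul_sum, ← Finset.sum_add_distrib]
    exact Finset.sum_congr rfl fun j _ => by ring
  have hn0 : (n : ℝ) / 2 ≠ 0 := by positivity
  rw [hsplit, mul_eq_zero, or_iff_right hn0] at hsum
  linear_combination hsum

theorem statement3 (n N : ℕ) (hn : 1 ≤ n) (hN : 1 ≤ N) (lam : ℝ)
    (hlam : ∀ k : ℕ, 1 ≤ k → k ≤ N → lam - (n : ℝ) / 2 + k ≠ 0)
    (a : ℕ → ℝ)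
    (ha : ∀ j, j ≤ N →
      a j = (-1) ^ j * (n.choose (N - j) : ℝ) * poch ((n : ℝ) / 2) j * poch lam j /
        (poch (lam - (n : ℝ) / 2 + 1) j * (j.factorial : ℝ))) :
    (lam - n + 2 * N) * ∑ j ∈ Finset.range (N + 1), (2 * N + 2 * j : ℝ) * a j =
      -(2 * N) * ((n : ℝ) - 2 * N) * ∑ j ∈ Finset.range (N + 1), a j :=
  statement3_general n N hn lam hlam a ha
end

section
/- Let n ≥ 1 and N ≥ 1 be integers. Then ∑_{j=0}^{N−1} (2N − 2j) · (−1)^j · C(n, N−j) · (n/2)_j (n/2 − N)_j / ((1 − N)_j · j!) = (4N / (N! · (N−1)!)) · (n/2)_N · (n/2 − N + 1)_{N−1}. (Note that (1 − N)_j ≠ 0 for 0 ≤ j ≤ N−1. This is the holographic formula for Q-curvature, Theorem 1.1, evaluated on the round sphere S^n, where Q_{2N}(S^n) = (n/2)_N (n/2 − N + 1)_{N−1}, T*_{2j}(n/2 − N)(1) = (n/2)_j (n/2 − N)_j / (2^{2j} j! (1 − N)_j), and v_{2k} = (−1)^k 2^{−2k} C(n,k).) -/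
/-!
Since `(1 - N)_j = (-1)^j (N-1)! / (N-1-j)!` and `(N-j)! C(n, N-j)` is the falling factorial
`n^{(N-j)}`, the sum equals `2 / (N-1)!` times `∑_{j<N} (2a)^{(N-j)} (a)_j (a-N)_j / j!` with
`a = n/2`. For every real `a` this last sum telescopes: Gosper's algorithm gives the
antidifference `G (j+1) = (2a)^{(N-j)} (a+1)_j (a-N+1)_j / j!`, `G 0 = 0`, and
`G N = 2 (a)_N (a-N+1)_{N-1} / (N-1)!`.
-/

open Polynomial Finset Nat

theorem poch_eq_eval_ascPochhammer (x : ℝ) (k : ℕ) :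
    poch x k = (ascPochhammer ℝ k).eval x := by
  induction k with
  | zero => simp [poch]
  | succ k ih => rw [poch, ih, ascPochhammer_succ_eval]

theorem poch_succ_left (x : ℝ) (k : ℕ) : poch x (k + 1) = x * poch (x + 1) k := by
  simp [poch_eq_eval_ascPochhammer, ascPochhammer_succ_left]

theorem poch_neg (r : ℝ) (k : ℕ) :
    poch (-r) k = (-1) ^ k * (descPochhammer ℝ k).eval r := by
  rw [poch_eq_eval_ascPochhammer, ascPochhammer_eval_neg_eq_descPochhammer]

theorem poch_one_sub_natCast_mul_factorial {N j : ℕ} (hj : j < N) :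
    poch (1 - N) j * (N - 1 - j) ! = (-1) ^ j * (N - 1) ! := by
  rw [show (1 : ℝ) - N = -((N - 1 : ℕ) : ℝ) by
      push_cast [Nat.cast_sub (by omega : 1 ≤ N)]; ring,
    poch_neg, descPochhammer_eval_eq_descFactorial, mul_assoc, ← Nat.cast_mul,
    mul_comm (descFactorial _ _), factorial_mul_descFactorial (by omega)]

noncomputable def gosperAntidiff (a : ℝ) (N : ℕ) : ℕ → ℝ
  | 0 => 0
  | m + 1 => (descPochhammer ℝ (N - m)).eval (2 * a) * poch (a + 1) m * poch (a - N + 1) m / m !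

theorem gosperAntidiff_succ_sub (a : ℝ) {N j : ℕ} (hj : j < N) :
    gosperAntidiff a N (j + 1) - gosperAntidiff a N j =
      (descPochhammer ℝ (N - j)).eval (2 * a) * poch a j * poch (a - N) j / j ! := by
  cases j with
  | zero => simp [gosperAntidiff, poch]
  | succ i =>
    obtain ⟨k, rfl⟩ : ∃ k, N = k + i + 2 := ⟨N - (i + 2), by omega⟩
    simp only [gosperAntidiff]
    rw [show k + i + 2 - (i + 1) = k + 1 by omega, show k + i + 2 - i = k + 1 + 1 by omega,
      poch_succ_left a i, poch_succ_left (a - _) i]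
    simp only [poch, descPochhammer_succ_eval, factorial_succ]
    push_cast
    field_simp
    -- after cancelling common factors: `(a+1+i)(a-k) - (2a-k)(i+1) = a(a-k-i-1)`
    ring

theorem sum_descPochhammer_mul_poch_mul_poch (a : ℝ) {N : ℕ} (hN : N ≠ 0) :
    ∑ j ∈ range N, (descPochhammer ℝ (N - j)).eval (2 * a) * poch a j * poch (a - N) j / j ! =
      2 * poch a N * poch (a - N + 1) (N - 1) / (N - 1) ! := by
  rw [← sum_congr rfl fun j hj => gosperAntidiff_succ_sub a (mem_range.mp hj), sum_range_sub]
  obtain ⟨M, rfl⟩ : ∃ M, N = M + 1 := ⟨N - 1, by omega⟩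
  simp [gosperAntidiff, poch_succ_left]
  ring

theorem summand_eq_descPochhammer_div {n N j : ℕ} (hj : j < N) (x y : ℝ) :
    (2 * N - 2 * j : ℝ) * (-1) ^ j * (n.choose (N - j) : ℝ) * x * y /
        (poch (1 - (N : ℝ)) j * j !) =
      2 / (N - 1) ! * ((descPochhammer ℝ (N - j)).eval (n : ℝ) * x * y / j !) := by
  rw [(eq_div_iff (by positivity)).mpr (poch_one_sub_natCast_mul_factorial hj),
    cast_choose_eq_descPochhammer_div]
  obtain ⟨k, rfl⟩ : ∃ k, N = j + k + 1 := ⟨N - j - 1, by omega⟩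
  simp only [show j + k + 1 - j = k + 1 by omega, show j + k + 1 - 1 - j = k by omega,
    factorial_succ]
  push_cast
  field_simp
  ring

theorem statement7_general (n N : ℕ) (hN : 1 ≤ N) :
    ∑ j ∈ Finset.range N,
        (2 * N - 2 * j : ℝ) * (-1) ^ j * (n.choose (N - j) : ℝ) *
          poch ((n : ℝ) / 2) j * poch ((n : ℝ) / 2 - N) j /
            (poch (1 - (N : ℝ)) j * (j.factorial : ℝ)) =
      4 * (N : ℝ) / ((N.factorial : ℝ) * ((N - 1).factorial : ℝ)) *
        poch ((n : ℝ) / 2) N * poch ((n : ℝ) / 2 - N + 1) (N - 1) := by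
  have hsum := sum_descPochhammer_mul_poch_mul_poch ((n : ℝ) / 2) (N := N) (by omega)
  rw [show 2 * ((n : ℝ) / 2) = n by ring] at hsum
  rw [sum_congr rfl fun j hj => summand_eq_descPochhammer_div (mem_range.mp hj) _ _, ← mul_sum,
    hsum]
  obtain ⟨M, rfl⟩ : ∃ M, N = M + 1 := ⟨N - 1, by omega⟩
  rw [Nat.add_sub_cancel, factorial_succ]
  push_cast
  field_simp
  ring

theorem statement7 (n N : ℕ) (hn : 1 ≤ n) (hN : 1 ≤ N) :
    ∑ j ∈ Finset.range N,
        (2 * N - 2 * j : ℝ) * (-1) ^ j * (n.choose (N - j) : ℝ) *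
          poch ((n : ℝ) / 2) j * poch ((n : ℝ) / 2 - N) j /
            (poch (1 - (N : ℝ)) j * (j.factorial : ℝ)) =
      4 * (N : ℝ) / ((N.factorial : ℝ) * ((N - 1).factorial : ℝ)) *
        poch ((n : ℝ) / 2) N * poch ((n : ℝ) / 2 - N + 1) (N - 1) :=
  statement7_general n N hN
end
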